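/- Let B be a unital algebra over ℂ and X algebraically free from B. The free difference quotient ∂_{X:B} : B⟨X⟩ → B⟨X⟩ ⊗ B⟨X⟩, the unique derivation sending B to 0 and X to 1⊗1, is coassociative: (∂_{X:B} ⊗ id) ∘ ∂_{X:B} = (id ⊗ ∂_{X:B}) ∘ ∂_{X:B}. -/

import Mathlib

open TensorProduct

variable {P : Type*} [Ring P] [Algebra ℂ P]

/-- `d : P → P ⊗ P` is a derivation for the natural `P`-bimodule structure on `P ⊗ P`. -/
def IsTensorDerivation (d : P →ₗ[ℂ] P ⊗[ℂ] P) : Prop :=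
  ∀ a b : P, d (a * b) =
    LinearMap.rTensor P (LinearMap.mulLeft ℂ a) (d b) +
    LinearMap.lTensor P (LinearMap.mulRight ℂ b) (d a)

/-!
For a derivation `d`, both `D₁ = (d ⊗ id) ∘ d` and `D₂ = (id ⊗ d) ∘ d` satisfy the same twisted
Leibniz rule `D(ab) = a · D(b) + D(a) · b + (id ⊗ m ⊗ id)(d a ⊗ d b)`, `m` the multiplication
of `P`: the cross term comes from `d` hitting the inner factor of `d a` in `D₂`, and of
`a · d b` in `D₁`. Hence `{a | D₁ a = D₂ a}` is a subalgebra. It contains `B`, which `d` kills,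
and `X`, where both sides reduce to `d 1 = 0`; as these generate `P`, it is all of `P`.
-/

open LinearMap

namespace LinearMap

variable {R M N Q S T : Type*} [CommSemiring R]
  [AddCommMonoid M] [AddCommMonoid N] [AddCommMonoid Q] [AddCommMonoid S] [AddCommMonoid T]
  [Module R M] [Module R N] [Module R Q] [Module R S] [Module R T]

theorem assoc_rTensor_lTensor (d : M →ₗ[R] N ⊗[R] Q) (f : S →ₗ[R] T) (u : M ⊗[R] S) :
    TensorProduct.assoc R N Q T (rTensor T d (lTensor M f u)) =
      lTensor N (lTensor Q f) (TensorProduct.assoc R N Q S (rTensor S d u)) := by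
  have : rTensor T d (lTensor M f u) = lTensor (N ⊗[R] Q) f (rTensor S d u) := by
    rw [← comp_apply, ← comp_apply, rTensor_comp_lTensor, lTensor_comp_rTensor]
  simp [this, lTensor_tensor]

theorem assoc_rTensor_rTensor (f : N →ₗ[R] T) (u : (N ⊗[R] Q) ⊗[R] S) :
    TensorProduct.assoc R T Q S (rTensor S (rTensor Q f) u) =
      rTensor (Q ⊗[R] S) f (TensorProduct.assoc R N Q S u) := by
  simp [rTensor_tensor]

end LinearMap

section MulMiddle

variable {R A : Type*} [CommSemiring R] [Semiring A] [Algebra R A]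

noncomputable def mulMiddle : A ⊗[R] A →ₗ[R] A ⊗[R] A →ₗ[R] A ⊗[R] (A ⊗[R] A) :=
  TensorProduct.curry <| (TensorProduct.assoc R A A A).toLinearMap ∘ₗ
    rTensor A (lTensor A (mul' R A)) ∘ₗ (tensorTensorTensorAssoc R A A A A).toLinearMap

@[simp]
theorem mulMiddle_tmul_tmul (x y u z : A) :
    mulMiddle (x ⊗ₜ[R] y) (u ⊗ₜ[R] z) = x ⊗ₜ ((y * u) ⊗ₜ z) :=
  rfl

theorem mulMiddle_tmul_left (x y : A) (w : A ⊗[R] A) :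
    mulMiddle (x ⊗ₜ[R] y) w = x ⊗ₜ rTensor A (mulLeft R y) w := by
  induction w using TensorProduct.induction_on with
  | zero => simp
  | tmul u z => simp
  | add w₁ w₂ h₁ h₂ => simp [h₁, h₂, tmul_add]

theorem mulMiddle_tmul_right (w : A ⊗[R] A) (y z : A) :
    mulMiddle w (y ⊗ₜ[R] z) = TensorProduct.assoc R A A A (lTensor A (mulRight R y) w ⊗ₜ z) := by
  induction w using TensorProduct.induction_on with
  | zero => simp
  | tmul x u => simp
  | add w₁ w₂ h₁ h₂ => simp [h₁, h₂, add_tmul]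

end MulMiddle

namespace IsTensorDerivation

variable {d : P →ₗ[ℂ] P ⊗[ℂ] P}

theorem map_one (hd : IsTensorDerivation d) : d 1 = 0 := by
  simpa using hd 1 1

theorem assoc_rTensor_rTensor_mulLeft (hd : IsTensorDerivation d) (a : P) (v : P ⊗[ℂ] P) :
    TensorProduct.assoc ℂ P P P (rTensor P d (rTensor P (mulLeft ℂ a) v)) =
      rTensor (P ⊗[ℂ] P) (mulLeft ℂ a) (TensorProduct.assoc ℂ P P P (rTensor P d v)) +
        mulMiddle (d a) v := by
  induction v using TensorProduct.induction_on with
  | zero => simp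
  | tmul y z =>
    rw [rTensor_tmul, rTensor_tmul, rTensor_tmul, mulLeft_apply, hd a y, add_tmul, map_add,
      ← rTensor_tmul, assoc_rTensor_rTensor, mulMiddle_tmul_right]
  | add v₁ v₂ h₁ h₂ =>
    simp only [map_add, h₁, h₂]
    abel

theorem lTensor_lTensor_mulRight (hd : IsTensorDerivation d) (b : P) (w : P ⊗[ℂ] P) :
    lTensor P d (lTensor P (mulRight ℂ b) w) =
      lTensor P (lTensor P (mulRight ℂ b)) (lTensor P d w) + mulMiddle w (d b) := by
  induction w using TensorProduct.induction_on with
  | zero => simp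
  | tmul x y =>
    rw [lTensor_tmul, lTensor_tmul, mulRight_apply, hd y b, tmul_add, mulMiddle_tmul_left,
      lTensor_tmul, lTensor_tmul, add_comm]
  | add w₁ w₂ h₁ h₂ =>
    simp only [map_add, LinearMap.add_apply, h₁, h₂]
    abel

theorem assoc_rTensor_map_mul (hd : IsTensorDerivation d) (a b : P) :
    TensorProduct.assoc ℂ P P P (rTensor P d (d (a * b))) =
      rTensor (P ⊗[ℂ] P) (mulLeft ℂ a) (TensorProduct.assoc ℂ P P P (rTensor P d (d b))) +
        lTensor P (lTensor P (mulRight ℂ b)) (TensorProduct.assoc ℂ P P P (rTensor P d (d a))) +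
        mulMiddle (d a) (d b) := by
  rw [hd a b, map_add, map_add, hd.assoc_rTensor_rTensor_mulLeft, assoc_rTensor_lTensor]
  abel

theorem lTensor_map_mul (hd : IsTensorDerivation d) (a b : P) :
    lTensor P d (d (a * b)) =
      rTensor (P ⊗[ℂ] P) (mulLeft ℂ a) (lTensor P d (d b)) +
        lTensor P (lTensor P (mulRight ℂ b)) (lTensor P d (d a)) + mulMiddle (d a) (d b) := by
  rw [hd a b, map_add, ← comp_apply (lTensor P d), lTensor_comp_rTensor, ← rTensor_comp_lTensor,
    comp_apply, hd.lTensor_lTensor_mulRight]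
  abel

noncomputable def coassocSubalgebra (hd : IsTensorDerivation d) : Subalgebra ℂ P :=
  (eqLocus ((TensorProduct.assoc ℂ P P P).toLinearMap ∘ₗ rTensor P d ∘ₗ d)
    (lTensor P d ∘ₗ d)).toSubalgebra (by simp [hd.map_one]) fun a b ha hb => by
      simp only [mem_eqLocus, comp_apply, LinearEquiv.coe_coe] at ha hb ⊢
      rw [hd.assoc_rTensor_map_mul, hd.lTensor_map_mul, ha, hb]

theorem mem_coassocSubalgebra (hd : IsTensorDerivation d) {a : P} :
    a ∈ hd.coassocSubalgebra ↔
      TensorProduct.assoc ℂ P P P (rTensor P d (d a)) = lTensor P d (d a) :=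
  Iff.rfl

end IsTensorDerivation

/-- Coassociativity of the free difference quotient: let `B⟨X⟩` be the algebra of
noncommutative polynomials in `X` with coefficients in a unital `ℂ`-algebra `B`
(modelled as a `ℂ`-algebra `P` generated by a unital subalgebra `B` together with an
element `X` algebraically free from `B`), and let `∂_{X:B} : B⟨X⟩ → B⟨X⟩ ⊗ B⟨X⟩` be the
(unique) derivation sending `B` to `0` and `X` to `1 ⊗ 1`.  Then `∂_{X:B}` is
coassociative: `(∂_{X:B} ⊗ id) ∘ ∂_{X:B} = (id ⊗ ∂_{X:B}) ∘ ∂_{X:B}`. -/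
theorem freeDifferenceQuotient_coassociative
    (B : Subalgebra ℂ P) (X : P)
    (hgen : Algebra.adjoin ℂ ((B : Set P) ∪ {X}) = ⊤)
    (d : P →ₗ[ℂ] P ⊗[ℂ] P)
    (hder : IsTensorDerivation d)
    (hB : ∀ b ∈ B, d b = 0)
    (hX : d X = (1 : P) ⊗ₜ[ℂ] (1 : P)) :
    ∀ a : P, TensorProduct.assoc ℂ P P P (LinearMap.rTensor P d (d a)) =
      LinearMap.lTensor P d (d a) := by
  have hgens : (B : Set P) ∪ {X} ⊆ hder.coassocSubalgebra := by
    refine Set.union_subset (fun b hb => ?_) (Set.singleton_subset_iff.2 ?_)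
    · simp [hder.mem_coassocSubalgebra, hB b hb]
    · simp [hder.mem_coassocSubalgebra, hX, hder.map_one]
  intro a
  rw [← hder.mem_coassocSubalgebra]
  exact Algebra.adjoin_le hgens (hgen ▸ Algebra.mem_top)
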